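/- Let S be a compact operator on L²([0,1]) with ‖S‖ < 1. Then I + S is invertible with bounded inverse, and there exists c > 0 such that for all 0 ≤ t₁ < ... < t_k ≤ 1, the vectors (I+S)1_{(t_i, t_{i+1}]}, i = 1,...,k-1, are linearly independent; moreover the Gram determinant of their normalizations is bounded below: G((I+S)Δg̃⁰(t_1), ..., (I+S)Δg̃⁰(t_{k-1})) ≥ c when restricted to indices outside any subset M (with the normalized increments Δg̃⁰(t_i) = 1_{(t_i,t_{i+1}]}/√(t_{i+1}-t_i)). -/

import Mathlib

/-!
Since `‖x + S x‖ ≥ (1 - ‖S‖) ‖x‖`, the operator `T = I + S` is injective and, for any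
orthonormal family `e`, the quadratic form of the Gram matrix of `T ∘ e` dominates
`(1 - ‖S‖)²` times the Euclidean one. Every eigenvalue of that Gram matrix is therefore at least
`(1 - ‖S‖)²`, so its determinant is at least `(1 - ‖S‖) ^ (2k)` with `k ≤ m` the number of
vectors. The normalized increments over a strictly increasing partition of `[0,1]` are
orthonormal in `L²([0,1])`, and the unnormalized ones differ from them by nonzero scalars.
-/

open MeasureTheory Set Filter

/-- Lebesgue measure on `[0,1]`. -/
noncomputable def μ01 : Measure ℝ := volume.restrict (Icc 0 1)

/-- The increment `1_{(a,b]}` of `g⁰(t) = 1_{[0,t]}` as an element of `L²([0,1])`. -/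
noncomputable def incr (a b : ℝ) : Lp ℝ 2 μ01 :=
  indicatorConstLp 2 (measurableSet_Ioc (a := a) (b := b))
    ((Measure.restrict_apply_le _ _).trans_lt measure_Ioc_lt_top).ne (1 : ℝ)

/-- The normalized increment `Δg̃⁰ = 1_{(a,b]} / √(b-a)`. -/
noncomputable def nincr (a b : ℝ) : Lp ℝ 2 μ01 :=
  (Real.sqrt (b - a))⁻¹ • incr a b

open Matrix
open scoped InnerProductSpace

theorem Matrix.IsHermitian.pow_card_le_det {n : Type*} [Fintype n] [DecidableEq n]
    {A : Matrix n n ℝ} (hA : A.IsHermitian) {a : ℝ} (ha : 0 ≤ a)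
    (h : ∀ x : n → ℝ, a * (x ⬝ᵥ x) ≤ x ⬝ᵥ A *ᵥ x) :
    a ^ Fintype.card n ≤ A.det := by
  have hev : ∀ i, a ≤ hA.eigenvalues i := by
    intro i
    set v := hA.eigenvectorBasis i
    have hv : v.ofLp ⬝ᵥ v.ofLp = 1 := by
      have h1 : ‖v‖ = 1 := hA.eigenvectorBasis.orthonormal.1 i
      have h2 := EuclideanSpace.inner_eq_star_dotProduct v v
      rw [real_inner_self_eq_norm_sq, h1] at h2
      simpa using h2.symm
    simpa [hA.eigenvalues_eq i, hv] using h v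
  rw [hA.det_eq_prod_eigenvalues, ← Finset.card_univ, ← Finset.prod_const]
  exact Finset.prod_le_prod (fun _ _ => ha) fun i _ => hev i

theorem isUnit_one_add_of_norm_lt_one {R : Type*} [NormedRing R] [HasSummableGeomSeries R]
    {x : R} (h : ‖x‖ < 1) : IsUnit (1 + x) := by
  have := (Units.oneSub (-x) (by rwa [norm_neg])).isUnit
  rwa [Units.val_oneSub, sub_neg_eq_add] at this

theorem one_sub_opNorm_mul_norm_le_norm_add_apply {𝕜 E : Type*} [NontriviallyNormedField 𝕜]
    [SeminormedAddCommGroup E] [NormedSpace 𝕜 E] (S : E →L[𝕜] E) (x : E) :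
    (1 - ‖S‖) * ‖x‖ ≤ ‖x + S x‖ := by
  have := norm_sub_norm_le x (-S x)
  rw [norm_neg, sub_neg_eq_add] at this
  nlinarith [S.le_opNorm x]

theorem pow_le_det_gram_comp_of_orthonormal {ι E F : Type*} [Fintype ι] [DecidableEq ι]
    [NormedAddCommGroup E] [InnerProductSpace ℝ E] [NormedAddCommGroup F] [InnerProductSpace ℝ F]
    (T : E →ₗ[ℝ] F) {a : ℝ} (ha : 0 ≤ a) (hT : ∀ x, a * ‖x‖ ≤ ‖T x‖) {e : ι → E}
    (he : Orthonormal ℝ e) :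
    a ^ (2 * Fintype.card ι) ≤ (gram ℝ (T ∘ e)).det := by
  rw [pow_mul]
  refine (isHermitian_gram ℝ _).pow_card_le_det (sq_nonneg a) fun x => ?_
  have hgram := star_dotProduct_gram_mulVec (𝕜 := ℝ) (T ∘ e) x x
  have hnorm : x ⬝ᵥ x = ‖∑ i, x i • e i‖ ^ 2 := by
    rw [← real_inner_self_eq_norm_sq, he.inner_sum]
    simp [dotProduct]
  simp only [star_trivial, Function.comp_apply, ← map_smul, ← map_sum,
    real_inner_self_eq_norm_sq] at hgram
  rw [hgram, hnorm, ← mul_pow]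
  exact pow_le_pow_left₀ (by positivity) (hT _) 2

theorem linearIndependent_comp_of_orthonormal {ι E F : Type*} [Fintype ι]
    [NormedAddCommGroup E] [InnerProductSpace ℝ E] [NormedAddCommGroup F] [InnerProductSpace ℝ F]
    (T : E →ₗ[ℝ] F) {a : ℝ} (ha : 0 < a) (hT : ∀ x, a * ‖x‖ ≤ ‖T x‖) {e : ι → E}
    (he : Orthonormal ℝ e) : LinearIndependent ℝ (T ∘ e) := by
  classical
  exact linearIndependent_of_det_gram_ne_zero
    ((pow_pos ha _).trans_le (pow_le_det_gram_comp_of_orthonormal T ha.le hT he)).ne'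

theorem μ01_real_Ioc {a b : ℝ} (ha : 0 ≤ a) (hab : a ≤ b) (hb : b ≤ 1) :
    μ01.real (Ioc a b) = b - a := by
  rw [measureReal_def, μ01, Measure.restrict_apply measurableSet_Ioc,
    inter_eq_left.mpr (Ioc_subset_Icc_self.trans (Icc_subset_Icc ha hb)), Real.volume_Ioc,
    ENNReal.toReal_ofReal (sub_nonneg.mpr hab)]

theorem real_inner_incr (a b c d : ℝ) :
    ⟪incr a b, incr c d⟫_ℝ = μ01.real (Ioc a b ∩ Ioc c d) :=
  L2.real_inner_indicatorConstLp_one_indicatorConstLp_one _ _ _ _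

theorem real_inner_nincr_of_le {a b c d : ℝ} (h : b ≤ c) : ⟪nincr a b, nincr c d⟫_ℝ = 0 := by
  simp [nincr, real_inner_smul_left, real_inner_smul_right, real_inner_incr,
    (Ioc_disjoint_Ioc_of_le h).inter_eq]

theorem norm_nincr {a b : ℝ} (ha : 0 ≤ a) (hab : a < b) (hb : b ≤ 1) : ‖nincr a b‖ = 1 := by
  have hsq : ‖incr a b‖ ^ 2 = b - a := by
    rw [← real_inner_self_eq_norm_sq, real_inner_incr, inter_self, μ01_real_Ioc ha hab.le hb]
  have hpos : 0 < √(b - a) := Real.sqrt_pos.mpr (sub_pos.mpr hab)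
  rw [nincr, norm_smul, norm_inv, Real.norm_of_nonneg hpos.le,
    ← Real.sqrt_sq (norm_nonneg (incr a b)), hsq, inv_mul_cancel₀ hpos.ne']

theorem sqrt_smul_nincr {a b : ℝ} (hab : a < b) : √(b - a) • nincr a b = incr a b := by
  rw [nincr, smul_smul, mul_inv_cancel₀ (Real.sqrt_pos.mpr (sub_pos.mpr hab)).ne', one_smul]

theorem orthonormal_nincr {m : ℕ} {t : Fin (m + 1) → ℝ} (ht : StrictMono t)
    (ht01 : ∀ i, t i ∈ Icc (0 : ℝ) 1) :
    Orthonormal ℝ fun i : Fin m => nincr (t i.castSucc) (t i.succ) := by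
  have hle : ∀ i j : Fin m, i < j → t i.succ ≤ t j.castSucc := fun i j hij =>
    ht.monotone (Fin.succ_le_castSucc_iff.mpr hij)
  refine ⟨fun i => norm_nincr (ht01 _).1 (ht Fin.castSucc_lt_succ) (ht01 _).2, fun i j hij => ?_⟩
  rcases hij.lt_or_gt with h | h
  · exact real_inner_nincr_of_le (hle i j h)
  · rw [real_inner_comm]
    exact real_inner_nincr_of_le (hle j i h)

theorem perturbed_increments_gram_bound_general
    (S : Lp ℝ 2 μ01 →L[ℝ] Lp ℝ 2 μ01)
    (hSnorm : ‖S‖ < 1) :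
    IsUnit ((1 : Lp ℝ 2 μ01 →L[ℝ] Lp ℝ 2 μ01) + S) ∧
    (∀ (m : ℕ) (t : Fin (m + 1) → ℝ), StrictMono t → (∀ i, t i ∈ Icc (0:ℝ) 1) →
      LinearIndependent ℝ
        (fun i : Fin m => incr (t i.castSucc) (t i.succ) +
          S (incr (t i.castSucc) (t i.succ)))) ∧
    (∀ m : ℕ, ∃ c > (0:ℝ), ∀ (t : Fin (m + 1) → ℝ), StrictMono t →
      (∀ i, t i ∈ Icc (0:ℝ) 1) → ∀ M : Finset (Fin m),
        c ≤ Matrix.det (Matrix.of fun i j : {i : Fin m // i ∉ M} =>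
          (inner ℝ
            (nincr (t i.1.castSucc) (t i.1.succ) + S (nincr (t i.1.castSucc) (t i.1.succ)))
            (nincr (t j.1.castSucc) (t j.1.succ) + S (nincr (t j.1.castSucc) (t j.1.succ)))
            : ℝ))) := by
  set T : Lp ℝ 2 μ01 →L[ℝ] Lp ℝ 2 μ01 := 1 + S
  have hT (x) : T x = x + S x := rfl
  have ha : 0 < 1 - ‖S‖ := sub_pos.mpr hSnorm
  have hTlower := one_sub_opNorm_mul_norm_le_norm_add_apply S
  refine ⟨isUnit_one_add_of_norm_lt_one hSnorm, fun m t ht ht01 => ?_,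
    fun m => ⟨(1 - ‖S‖) ^ (2 * m), pow_pos ha _, fun t ht ht01 M => ?_⟩⟩
  · have hsqrt (i : Fin m) : √(t i.succ - t i.castSucc) ≠ 0 :=
      (Real.sqrt_pos.mpr (sub_pos.mpr (ht Fin.castSucc_lt_succ))).ne'
    have hfamily : (fun i : Fin m => incr (t i.castSucc) (t i.succ) +
        S (incr (t i.castSucc) (t i.succ))) =
        (fun i => Units.mk0 _ (hsqrt i)) •
          (T.toLinearMap ∘ fun i => nincr (t i.castSucc) (t i.succ)) := by
      funext i
      simp [← sqrt_smul_nincr (ht (Fin.castSucc_lt_succ (i := i))), hT, smul_add]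
    rw [hfamily]
    exact (linearIndependent_comp_of_orthonormal _ ha hTlower
      (orthonormal_nincr ht ht01)).units_smul _
  · have hgram := pow_le_det_gram_comp_of_orthonormal T.toLinearMap ha.le hTlower
      ((orthonormal_nincr ht ht01).comp (Subtype.val : {i : Fin m // i ∉ M} → Fin m)
        Subtype.val_injective)
    refine le_trans (pow_le_pow_of_le_one ha.le (by linarith [norm_nonneg S]) ?_) hgram
    exact Nat.mul_le_mul_left 2
      ((Fintype.card_subtype_le (· ∉ M)).trans_eq (Fintype.card_fin m))

/-- For a compact operator `S` on `L²([0,1])` with `‖S‖ < 1`: `I + S` is invertible; the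
vectors `(I+S)1_{(tᵢ,t_{i+1}]}` built from any increasing family `0 ≤ t₁ < … < t_k ≤ 1`
are linearly independent; and the Gram determinants of the images under `I + S` of the
normalized increments, restricted to the indices outside any subset `M`, are bounded
below by a positive constant `c`. -/
theorem perturbed_increments_gram_bound
    (S : Lp ℝ 2 μ01 →L[ℝ] Lp ℝ 2 μ01)
    (hScomp : IsCompactOperator S) (hSnorm : ‖S‖ < 1) :
    IsUnit ((1 : Lp ℝ 2 μ01 →L[ℝ] Lp ℝ 2 μ01) + S) ∧
    (∀ (m : ℕ) (t : Fin (m + 1) → ℝ), StrictMono t → (∀ i, t i ∈ Icc (0:ℝ) 1) →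
      LinearIndependent ℝ
        (fun i : Fin m => incr (t i.castSucc) (t i.succ) +
          S (incr (t i.castSucc) (t i.succ)))) ∧
    (∀ m : ℕ, ∃ c > (0:ℝ), ∀ (t : Fin (m + 1) → ℝ), StrictMono t →
      (∀ i, t i ∈ Icc (0:ℝ) 1) → ∀ M : Finset (Fin m),
        c ≤ Matrix.det (Matrix.of fun i j : {i : Fin m // i ∉ M} =>
          (inner ℝ
            (nincr (t i.1.castSucc) (t i.1.succ) + S (nincr (t i.1.castSucc) (t i.1.succ)))
            (nincr (t j.1.castSucc) (t j.1.succ) + S (nincr (t j.1.castSucc) (t j.1.succ)))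
            : ℝ))) :=
  perturbed_increments_gram_bound_general S hSnorm
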